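/- arXiv:1502.05163 — 5 statements merged into one kernel-verified Lean document; each statement's English description precedes it below -/
import Mathlib

section
/- Let n ≥ 1 and let a = (a_1,…,a_n) and b = (b_1,…,b_n) be points of D such that a_i ≤ b_i for all i = 1,…,n. Then f(a) ≥ f(b). -/
lemma abel_key (r S : ℕ → ℝ) (hS0 : S 0 = 0) :
    ∀ n, 1 ≤ n →
    (∀ j, 1 ≤ j → j ≤ n → 0 ≤ S j) →
    (∀ j, 1 ≤ j → j + 1 ≤ n → r (j + 1) ≤ r j) →
    r n * S n ≤ ∑ j ∈ Finset.Icc 1 n, r j * (S j - S (j - 1)) := by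
  intro n hn
  induction n, hn using Nat.le_induction with
  | base =>
    intro _ _
    rw [Finset.Icc_self, Finset.sum_singleton]
    simp [hS0]
  | succ n hn ih =>
    intro hSpos hrmono
    rw [Finset.sum_Icc_succ_top (by omega : 1 ≤ n + 1)]
    have h1 := ih (fun j hj hj' => hSpos j hj (by omega))
      (fun j hj hj' => hrmono j hj (by omega))
    have h2 : r (n + 1) ≤ r n := hrmono n hn (le_refl _)
    have h3 : 0 ≤ S n := hSpos n hn (by omega)
    have h4 : (n + 1) - 1 = n := rfl
    rw [h4]
    nlinarith [h1, h2, h3]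

/-- For `n ≥ 1` and points `a, b` of the set
`D = {t ∈ ℝⁿ : tᵢ > 0, tⱼ² ≤ tⱼ₋₁·tⱼ₊₁ for j = 1,…,n−1, with t₀ = 1}`
(coordinates indexed `1,…,n`, with value at `0` fixed to `1`),
if `aᵢ ≤ bᵢ` for all `i = 1,…,n`, then
`f(a) ≥ f(b)`, where `f(t) = Σ_{j=1}^{n} t_{j−1}/t_j`. -/
theorem stmt0 (n : ℕ) (hn : 1 ≤ n) (a b : ℕ → ℝ)
    (ha0 : a 0 = 1) (hb0 : b 0 = 1)
    (hapos : ∀ i ∈ Finset.Icc 1 n, 0 < a i)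
    (hbpos : ∀ i ∈ Finset.Icc 1 n, 0 < b i)
    (haD : ∀ j, 1 ≤ j → j ≤ n - 1 → (a j) ^ 2 ≤ a (j - 1) * a (j + 1))
    (hbD : ∀ j, 1 ≤ j → j ≤ n - 1 → (b j) ^ 2 ≤ b (j - 1) * b (j + 1))
    (hab : ∀ i ∈ Finset.Icc 1 n, a i ≤ b i) :
    ∑ j ∈ Finset.Icc 1 n, b (j - 1) / b j ≤ ∑ j ∈ Finset.Icc 1 n, a (j - 1) / a j := by
  have hA : ∀ j, j ≤ n → 0 < a j := by
    intro j hj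
    rcases Nat.eq_zero_or_pos j with h | h
    · rw [h, ha0]; norm_num
    · exact hapos j (Finset.mem_Icc.2 ⟨h, hj⟩)
  have hB : ∀ j, j ≤ n → 0 < b j := by
    intro j hj
    rcases Nat.eq_zero_or_pos j with h | h
    · rw [h, hb0]; norm_num
    · exact hbpos j (Finset.mem_Icc.2 ⟨h, hj⟩)
  set S : ℕ → ℝ := fun j => Real.log (b j / a j) with hS
  have hS0 : S 0 = 0 := by simp [hS, ha0, hb0]
  have hSpos : ∀ j, 1 ≤ j → j ≤ n → 0 ≤ S j := by
    intro j hj1 hjn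
    apply Real.log_nonneg
    rw [le_div_iff₀ (hA j hjn)]
    simpa using hab j (Finset.mem_Icc.2 ⟨hj1, hjn⟩)
  set r : ℕ → ℝ := fun j => b (j - 1) / b j with hr
  have hrmono : ∀ j, 1 ≤ j → j + 1 ≤ n → r (j + 1) ≤ r j := by
    intro j hj1 hjn
    have hD := hbD j hj1 (by omega)
    have hbm : 0 < b (j - 1) := hB _ (by omega)
    have hbj : 0 < b j := hB _ (by omega)
    have hbp : 0 < b (j + 1) := hB _ hjn
    have h4 : (j + 1) - 1 = j := rfl
    simp only [hr, h4]
    rw [div_le_div_iff₀ hbp hbj]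
    nlinarith
  -- pointwise bound
  have hpt : ∀ j ∈ Finset.Icc 1 n, r j + r j * (S j - S (j - 1)) ≤ a (j - 1) / a j := by
    intro j hj
    rw [Finset.mem_Icc] at hj
    have haj : 0 < a j := hA j hj.2
    have ham : 0 < a (j - 1) := hA _ (by omega)
    have hbj : 0 < b j := hB j hj.2
    have hbm : 0 < b (j - 1) := hB _ (by omega)
    have hrpos : 0 < r j := div_pos hbm hbj
    have hvm : 0 < b (j - 1) / a (j - 1) := div_pos hbm ham
    have hvj : 0 < b j / a j := div_pos hbj haj
    have hlog : S j - S (j - 1) = Real.log ((b j / a j) / (b (j - 1) / a (j - 1))) := by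
      rw [Real.log_div (ne_of_gt hvj) (ne_of_gt hvm)]
    have hexp : 1 + (S j - S (j - 1)) ≤ (b j / a j) / (b (j - 1) / a (j - 1)) := by
      rw [hlog]
      calc 1 + Real.log ((b j / a j) / (b (j - 1) / a (j - 1)))
          ≤ Real.exp (Real.log ((b j / a j) / (b (j - 1) / a (j - 1)))) := by
            linarith [Real.add_one_le_exp (Real.log ((b j / a j) / (b (j - 1) / a (j - 1))))]
        _ = (b j / a j) / (b (j - 1) / a (j - 1)) := Real.exp_log (div_pos hvj hvm)
    have heq : r j * ((b j / a j) / (b (j - 1) / a (j - 1))) = a (j - 1) / a j := by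
      simp only [hr]
      field_simp
    calc r j + r j * (S j - S (j - 1)) = r j * (1 + (S j - S (j - 1))) := by ring
      _ ≤ r j * ((b j / a j) / (b (j - 1) / a (j - 1))) :=
          mul_le_mul_of_nonneg_left hexp (le_of_lt hrpos)
      _ = a (j - 1) / a j := heq
  have hsum : ∑ j ∈ Finset.Icc 1 n, (r j + r j * (S j - S (j - 1)))
      ≤ ∑ j ∈ Finset.Icc 1 n, a (j - 1) / a j := Finset.sum_le_sum hpt
  rw [Finset.sum_add_distrib] at hsum
  have habel := abel_key r S hS0 n hn hSpos hrmono
  have hrn : 0 < r n := div_pos (hB _ (by omega)) (hB _ (le_refl _))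
  have hSn : 0 ≤ S n := hSpos n hn (le_refl _)
  have : 0 ≤ r n * S n := mul_nonneg (le_of_lt hrn) hSn
  linarith
end

section
/- Let n ≥ 1 and let a = (a_1,…,a_n) and b = (b_1,…,b_n) be points of D such that a_i ≤ b_i for all i = 1,…,n. Then f(a) = f(b) if and only if a = b. -/
/-!
Write `xⱼ = aⱼ₋₁/aⱼ`, `yⱼ = bⱼ₋₁/bⱼ` and `Lⱼ = log (bⱼ/aⱼ) ≥ 0`, so that `log (xⱼ/yⱼ) = Lⱼ - Lⱼ₋₁`.
The tangent-line bound `y log (x/y) ≤ x - y`, strict unless `x = y`, gives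
`f(a) - f(b) ≥ ∑ yⱼ (Lⱼ - Lⱼ₋₁)`, and by Abel summation the right-hand side is
`∑ₖ (yₖ - yₖ₊₁) Lₖ + yₙ Lₙ ≥ 0` because log-convexity of `b` makes `y` nonincreasing.
Hence `f(b) ≤ f(a)`, and equality forces `xⱼ = yⱼ` for every `j`, i.e. `a = b`.
-/

open Finset Real

lemma mul_log_div_le_sub {x y : ℝ} (hx : 0 < x) (hy : 0 < y) : y * log (x / y) ≤ x - y :=
  calc y * log (x / y) ≤ y * (x / y - 1) :=
        mul_le_mul_of_nonneg_left (log_le_sub_one_of_pos (div_pos hx hy)) hy.le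
    _ = x - y := by field_simp

lemma mul_log_div_lt_sub {x y : ℝ} (hx : 0 < x) (hy : 0 < y) (hxy : x ≠ y) :
    y * log (x / y) < x - y :=
  calc y * log (x / y) < y * (x / y - 1) := by
        refine mul_lt_mul_of_pos_left (log_lt_sub_one_of_pos (div_pos hx hy) ?_) hy
        rwa [ne_eq, div_eq_one_iff_eq hy.ne']
    _ = x - y := by field_simp

lemma div_le_div_of_sq_le_mul {p q r : ℝ} (hq : 0 < q) (hr : 0 < r) (h : q ^ 2 ≤ p * r) :
    q / r ≤ p / q := by
  rw [div_le_div_iff₀ hr hq]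
  nlinarith

lemma mul_le_sum_mul_sub {y L : ℕ → ℝ} {n : ℕ} (hL0 : L 0 = 0) (hL : ∀ i ≤ n, 0 ≤ L i)
    (hy : ∀ i ∈ Ico 1 n, y (i + 1) ≤ y i) :
    y n * L n ≤ ∑ i ∈ Icc 1 n, y i * (L i - L (i - 1)) := by
  induction n with
  | zero => simp [hL0]
  | succ m ih =>
    have hm := ih (fun i hi => hL i (by omega))
      (fun i hi => hy i (by simp only [mem_Ico] at hi ⊢; omega))
    have hstep : 0 ≤ (y m - y (m + 1)) * L m := by
      rcases m with _ | m
      · simp [hL0]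
      · exact mul_nonneg (sub_nonneg.2 (hy _ (by simp))) (hL _ (by omega))
    rw [sum_Icc_succ_top (by omega), Nat.add_sub_cancel]
    nlinarith

section

variable {n : ℕ} {a b : ℕ → ℝ}

lemma div_pred_pos (ha : ∀ i ≤ n, 0 < a i) : ∀ j ∈ Icc 1 n, 0 < a (j - 1) / a j :=
  fun j hj => div_pos (ha _ (by grind)) (ha j (by grind))

lemma sum_mul_log_div_nonneg (ha : ∀ i ≤ n, 0 < a i) (hb : ∀ i ≤ n, 0 < b i)
    (h0 : a 0 = b 0) (hab : ∀ i ≤ n, a i ≤ b i)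
    (hbD : ∀ j ∈ Ico 1 n, b j ^ 2 ≤ b (j - 1) * b (j + 1)) :
    0 ≤ ∑ j ∈ Icc 1 n, b (j - 1) / b j * log (a (j - 1) / a j / (b (j - 1) / b j)) := by
  set L : ℕ → ℝ := fun i => log (b i / a i)
  have hlog : ∀ j ∈ Icc 1 n, log (a (j - 1) / a j / (b (j - 1) / b j)) = L j - L (j - 1) := by
    intro j hj
    have hjn := (mem_Icc.1 hj).2
    have := ha (j - 1) (by omega); have := ha j hjn
    have := hb (j - 1) (by omega); have := hb j hjn
    rw [← log_div (by positivity) (by positivity)]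
    congr 1
    field_simp
  have hL : ∀ i ≤ n, 0 ≤ L i := fun i hi => log_nonneg ((one_le_div (ha i hi)).2 (hab i hi))
  have hy : ∀ j ∈ Ico 1 n, b (j + 1 - 1) / b (j + 1) ≤ b (j - 1) / b j := by
    intro j hj
    have hjn := (mem_Ico.1 hj).2
    rw [Nat.add_sub_cancel]
    exact div_le_div_of_sq_le_mul (hb j hjn.le) (hb (j + 1) hjn) (hbD j hj)
  rw [sum_congr rfl fun j hj => by rw [hlog j hj]]
  calc 0 ≤ b (n - 1) / b n * L n :=
        mul_nonneg (div_pos (hb _ (Nat.sub_le n 1)) (hb n le_rfl)).le (hL n le_rfl)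
    _ ≤ _ := mul_le_sum_mul_sub (y := fun j => b (j - 1) / b j)
        (by simp [L, h0, div_self (hb 0 (Nat.zero_le n)).ne']) hL hy

lemma div_eq_div_of_sum_div_eq (ha : ∀ i ≤ n, 0 < a i) (hb : ∀ i ≤ n, 0 < b i)
    (h0 : a 0 = b 0) (hab : ∀ i ≤ n, a i ≤ b i)
    (hbD : ∀ j ∈ Ico 1 n, b j ^ 2 ≤ b (j - 1) * b (j + 1))
    (hsum : ∑ j ∈ Icc 1 n, a (j - 1) / a j = ∑ j ∈ Icc 1 n, b (j - 1) / b j) :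
    ∀ j ∈ Icc 1 n, a (j - 1) / a j = b (j - 1) / b j := by
  by_contra! ⟨j, hj, hne⟩
  have hx := div_pred_pos ha
  have hy := div_pred_pos hb
  have hlt := sum_lt_sum (fun j hj => mul_log_div_le_sub (hx j hj) (hy j hj))
    ⟨j, hj, mul_log_div_lt_sub (hx j hj) (hy j hj) hne⟩
  rw [sum_sub_distrib, hsum, sub_self] at hlt
  linarith [sum_mul_log_div_nonneg ha hb h0 hab hbD]

lemma eq_of_div_eq_div (ha : ∀ i ≤ n, 0 < a i) (hb : ∀ i ≤ n, 0 < b i) (h0 : a 0 = b 0)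
    (hdiv : ∀ j ∈ Icc 1 n, a (j - 1) / a j = b (j - 1) / b j) : ∀ i ≤ n, a i = b i := by
  intro i hi
  induction i with
  | zero => exact h0
  | succ i ih =>
    have h := hdiv (i + 1) (mem_Icc.2 ⟨by omega, hi⟩)
    rw [Nat.add_sub_cancel, ih (by omega),
      div_eq_div_iff (ha _ hi).ne' (hb _ hi).ne'] at h
    exact mul_left_cancel₀ (hb i (by omega)).ne' (by linarith)

end

lemma forall_le_of_zero_of_Icc {P : ℕ → Prop} {n : ℕ} (h0 : P 0) (h : ∀ i ∈ Icc 1 n, P i) :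
    ∀ i ≤ n, P i
  | 0, _ => h0
  | i + 1, hi => h (i + 1) (mem_Icc.2 ⟨by omega, hi⟩)

theorem stmt1_general (n : ℕ) (a b : ℕ → ℝ)
    (ha0 : a 0 = 1) (hb0 : b 0 = 1)
    (hapos : ∀ i ∈ Finset.Icc 1 n, 0 < a i)
    (hbpos : ∀ i ∈ Finset.Icc 1 n, 0 < b i)
    (hbD : ∀ j, 1 ≤ j → j ≤ n - 1 → (b j) ^ 2 ≤ b (j - 1) * b (j + 1))
    (hab : ∀ i ∈ Finset.Icc 1 n, a i ≤ b i) :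
    ∑ j ∈ Finset.Icc 1 n, a (j - 1) / a j = ∑ j ∈ Finset.Icc 1 n, b (j - 1) / b j ↔
      ∀ i ∈ Finset.Icc 1 n, a i = b i := by
  have h0 : a 0 = b 0 := ha0.trans hb0.symm
  have ha := forall_le_of_zero_of_Icc (ha0 ▸ one_pos) hapos
  have hb := forall_le_of_zero_of_Icc (hb0 ▸ one_pos) hbpos
  have hab' := forall_le_of_zero_of_Icc h0.le hab
  have hbD' : ∀ j ∈ Ico 1 n, b j ^ 2 ≤ b (j - 1) * b (j + 1) := fun j hj =>
    hbD j (mem_Ico.1 hj).1 (by grind)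
  constructor
  · intro hsum i hi
    exact eq_of_div_eq_div ha hb h0 (div_eq_div_of_sum_div_eq ha hb h0 hab' hbD' hsum) i
      (mem_Icc.1 hi).2
  · intro heq
    have heq' := forall_le_of_zero_of_Icc h0 heq
    exact sum_congr rfl fun j hj => by rw [heq' j (mem_Icc.1 hj).2, heq' (j - 1) (by grind)]

/-- For `n ≥ 1` and points `a, b` of the set
`D = {t ∈ ℝⁿ : tᵢ > 0, tⱼ² ≤ tⱼ₋₁·tⱼ₊₁ for j = 1,…,n−1, with t₀ = 1}`
(coordinates indexed `1,…,n`, with value at `0` fixed to `1`),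
if `aᵢ ≤ bᵢ` for all `i = 1,…,n`, then `f(a) = f(b)` if and only if `a = b`
(as points of `ℝⁿ`), where `f(t) = Σ_{j=1}^{n} t_{j−1}/t_j`. -/
theorem stmt1 (n : ℕ) (hn : 1 ≤ n) (a b : ℕ → ℝ)
    (ha0 : a 0 = 1) (hb0 : b 0 = 1)
    (hapos : ∀ i ∈ Finset.Icc 1 n, 0 < a i)
    (hbpos : ∀ i ∈ Finset.Icc 1 n, 0 < b i)
    (haD : ∀ j, 1 ≤ j → j ≤ n - 1 → (a j) ^ 2 ≤ a (j - 1) * a (j + 1))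
    (hbD : ∀ j, 1 ≤ j → j ≤ n - 1 → (b j) ^ 2 ≤ b (j - 1) * b (j + 1))
    (hab : ∀ i ∈ Finset.Icc 1 n, a i ≤ b i) :
    ∑ j ∈ Finset.Icc 1 n, a (j - 1) / a j = ∑ j ∈ Finset.Icc 1 n, b (j - 1) / b j ↔
      ∀ i ∈ Finset.Icc 1 n, a i = b i :=
  stmt1_general n a b ha0 hb0 hapos hbpos hbD hab
end

section
/- For every n ≥ 1, the set D is a convex subset of ℝⁿ. -/
/-!
The condition `t_j² ≤ t_{j-1} t_{j+1}` (with all `t_i > 0`) says that `(t_{j-1}, t_j, t_{j+1})`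
lies in the rotated second-order cone `{(a, b, c) : a, c ≥ 0, b² ≤ a c}`, which is closed under
addition (by AM-GM on the cross terms) and under nonnegative scaling, hence convex. Since each
extended coordinate `t ↦ t_i` (including `t_0 = 1`) is affine, `D` is an intersection of
preimages of convex sets under affine maps.
-/

open Finset

/-- The extension of a point `t ∈ ℝⁿ` (coordinates `t₁,…,tₙ` indexed by `Fin n`,
so that `t i` is `t_{i+1}`) to indices `0,1,…` with the convention `t₀ = 1`
(and value `1` outside `{0,1,…,n}`, which is irrelevant). -/
noncomputable def extCoord (n : ℕ) (t : Fin n → ℝ) (i : ℕ) : ℝ :=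
  if h : 1 ≤ i ∧ i ≤ n then t ⟨i - 1, by omega⟩ else 1

/-- The set `D = {t ∈ ℝⁿ : tᵢ > 0 for all i, and tⱼ² ≤ tⱼ₋₁·tⱼ₊₁ for all
j = 1,…,n−1, with the convention t₀ = 1}`. -/
def Dset (n : ℕ) : Set (Fin n → ℝ) :=
  {t | (∀ i, 0 < t i) ∧
    ∀ j, 1 ≤ j → j ≤ n - 1 → (extCoord n t j) ^ 2 ≤ extCoord n t (j - 1) * extCoord n t (j + 1)}

section RotatedCone

variable {R : Type*} [Field R] [LinearOrder R] [IsStrictOrderedRing R] {a b c a' b' c' : R}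

theorem two_mul_le_of_sq_le_mul (ha : 0 ≤ a) (hc : 0 ≤ c) (ha' : 0 ≤ a') (hc' : 0 ≤ c')
    (h : b ^ 2 ≤ a * c) (h' : b' ^ 2 ≤ a' * c') :
    2 * b * b' ≤ a * c' + a' * c := by
  have hsq : (2 * b * b') ^ 2 ≤ (a * c' + a' * c) ^ 2 := by
    nlinarith [sq_nonneg (a * c' - a' * c), mul_le_mul h h' (sq_nonneg b') (mul_nonneg ha hc)]
  exact (le_abs_self _).trans (abs_le_of_sq_le_sq hsq (by positivity))

theorem sq_add_le_mul_add_of_sq_le_mul (ha : 0 ≤ a) (hc : 0 ≤ c) (ha' : 0 ≤ a')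
    (hc' : 0 ≤ c')
    (h : b ^ 2 ≤ a * c) (h' : b' ^ 2 ≤ a' * c') :
    (b + b') ^ 2 ≤ (a + a') * (c + c') := by
  nlinarith [two_mul_le_of_sq_le_mul ha hc ha' hc' h h']

theorem sq_smul_le_mul_of_sq_le_mul {l : R} (h : b ^ 2 ≤ a * c) :
    (l * b) ^ 2 ≤ (l * a) * (l * c) := by
  nlinarith [mul_le_mul_of_nonneg_left h (sq_nonneg l)]

theorem sq_combo_le_mul_combo_of_sq_le_mul {l m : R} (hl : 0 ≤ l) (hm : 0 ≤ m)
    (ha : 0 ≤ a) (hc : 0 ≤ c) (ha' : 0 ≤ a') (hc' : 0 ≤ c')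
    (h : b ^ 2 ≤ a * c) (h' : b' ^ 2 ≤ a' * c') :
    (l * b + m * b') ^ 2 ≤ (l * a + m * a') * (l * c + m * c') :=
  sq_add_le_mul_add_of_sq_le_mul (mul_nonneg hl ha) (mul_nonneg hl hc) (mul_nonneg hm ha')
    (mul_nonneg hm hc') (sq_smul_le_mul_of_sq_le_mul h) (sq_smul_le_mul_of_sq_le_mul h')

end RotatedCone

theorem extCoord_pos {n : ℕ} {t : Fin n → ℝ} (ht : ∀ i, 0 < t i) (i : ℕ) :
    0 < extCoord n t i := by
  unfold extCoord
  split
  · exact ht _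
  · exact one_pos

theorem extCoord_add_smul {n : ℕ} {l m : ℝ} (hlm : l + m = 1) (x y : Fin n → ℝ) (i : ℕ) :
    extCoord n (l • x + m • y) i = l * extCoord n x i + m * extCoord n y i := by
  unfold extCoord
  split
  · rfl
  · rw [mul_one, mul_one, hlm]

theorem stmt2_general (n : ℕ) : Convex ℝ (Dset n) := by
  intro x hx y hy l m hl hm hlm
  refine ⟨fun i ↦ convex_Ioi (0 : ℝ) (hx.1 i) (hy.1 i) hl hm hlm, fun j hj₁ hj₂ ↦ ?_⟩
  simp only [extCoord_add_smul hlm]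
  exact sq_combo_le_mul_combo_of_sq_le_mul hl hm
    (extCoord_pos hx.1 _).le (extCoord_pos hx.1 _).le (extCoord_pos hy.1 _).le
    (extCoord_pos hy.1 _).le (hx.2 j hj₁ hj₂) (hy.2 j hj₁ hj₂)

/-- For every `n ≥ 1`, the set `D` is a convex subset of `ℝⁿ`. -/
theorem stmt2 (n : ℕ) (hn : 1 ≤ n) : Convex ℝ (Dset n) :=
  stmt2_general n
end

section
/- Let u, v, w, x, y, z be positive real numbers such that v² ≤ u·w and y² ≤ x·z, and let λ ∈ (0,1). If (λ·v + (1−λ)·y)² = (λ·u + (1−λ)·x)·(λ·w + (1−λ)·z), then v² = u·w, y² = x·z, and w/u = z/x. -/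
/-!
With `a = λ`, `b = 1 - λ`, the Cauchy–Schwarz gap splits as
`(a u + b x)(a w + b z) - (a v + b y)² = a²(uw - v²) + b²(xz - y²) + ab(uz + xw - 2vy)`,
and each summand is nonnegative, the last one by AM-GM: `(vy)² ≤ (uz)(xw)`.
Equality forces all three to vanish; then `(uz - xw)² = (uz + xw)² - 4(uw)(xz) = 4v²y² - 4v²y² = 0`.
-/

theorem two_mul_mul_le_add_of_sq_le_mul {u v w x y z : ℝ} (hu : 0 ≤ u) (hw : 0 ≤ w)
    (hx : 0 ≤ x) (hz : 0 ≤ z) (h1 : v ^ 2 ≤ u * w) (h2 : y ^ 2 ≤ x * z) :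
    2 * (v * y) ≤ u * z + x * w := by
  have hsq : (2 * (v * y)) ^ 2 ≤ (u * z + x * w) ^ 2 :=
    calc (2 * (v * y)) ^ 2 = 4 * (v ^ 2 * y ^ 2) := by ring
      _ ≤ 4 * ((u * w) * (x * z)) := by gcongr
      _ ≤ (u * z + x * w) ^ 2 := by nlinarith [sq_nonneg (u * z - x * w)]
  exact (le_abs_self _).trans (abs_le_of_sq_le_sq hsq (by positivity))

theorem sq_eq_mul_of_mix_sq_eq_mix_mul {u v w x y z a b : ℝ} (ha : 0 < a) (hb : 0 < b)
    (h1 : v ^ 2 ≤ u * w) (h2 : y ^ 2 ≤ x * z) (hcross : 2 * (v * y) ≤ u * z + x * w)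
    (heq : (a * v + b * y) ^ 2 = (a * u + b * x) * (a * w + b * z)) :
    v ^ 2 = u * w ∧ y ^ 2 = x * z ∧ u * z + x * w = 2 * (v * y) := by
  have hgap : a ^ 2 * (u * w - v ^ 2) + b ^ 2 * (x * z - y ^ 2)
      + a * b * (u * z + x * w - 2 * (v * y)) = 0 := by linear_combination -heq
  have h1' : 0 ≤ a ^ 2 * (u * w - v ^ 2) := by have := sub_nonneg.2 h1; positivity
  have h2' : 0 ≤ b ^ 2 * (x * z - y ^ 2) := by have := sub_nonneg.2 h2; positivity
  have h3' : 0 ≤ a * b * (u * z + x * w - 2 * (v * y)) := by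
    have := sub_nonneg.2 hcross; positivity
  obtain ⟨h12, h3⟩ := (add_eq_zero_iff_of_nonneg (add_nonneg h1' h2') h3').1 hgap
  obtain ⟨hv0, hy0⟩ := (add_eq_zero_iff_of_nonneg h1' h2').1 h12
  refine ⟨?_, ?_, ?_⟩
  · linarith [(mul_eq_zero.1 hv0).resolve_left (by positivity)]
  · linarith [(mul_eq_zero.1 hy0).resolve_left (by positivity)]
  · linarith [(mul_eq_zero.1 h3).resolve_left (by positivity)]

theorem mul_eq_mul_of_add_eq_two_mul {u v w x y z : ℝ} (hcross : u * z + x * w = 2 * (v * y))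
    (hv : v ^ 2 = u * w) (hy : y ^ 2 = x * z) : u * z = x * w := by
  have hsq : (u * z - x * w) ^ 2 = 0 := by
    linear_combination (u * z + x * w + 2 * (v * y)) * hcross + 4 * y ^ 2 * hv + 4 * u * w * hy
  exact sub_eq_zero.1 (pow_eq_zero_iff two_ne_zero |>.1 hsq)

theorem stmt7_general (u v w x y z : ℝ) (hu : 0 < u) (hx : 0 < x)
    (h1 : v ^ 2 ≤ u * w) (h2 : y ^ 2 ≤ x * z)
    (l : ℝ) (hl : l ∈ Set.Ioo (0 : ℝ) 1)
    (heq : (l * v + (1 - l) * y) ^ 2 = (l * u + (1 - l) * x) * (l * w + (1 - l) * z)) :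
    v ^ 2 = u * w ∧ y ^ 2 = x * z ∧ w / u = z / x := by
  obtain ⟨hl0, hl1⟩ := hl
  have hw : 0 ≤ w := nonneg_of_mul_nonneg_right ((sq_nonneg v).trans h1) hu
  have hz : 0 ≤ z := nonneg_of_mul_nonneg_right ((sq_nonneg y).trans h2) hx
  obtain ⟨hv, hy, hcross⟩ := sq_eq_mul_of_mix_sq_eq_mix_mul hl0 (sub_pos.2 hl1) h1 h2
    (two_mul_mul_le_add_of_sq_le_mul hu.le hw hx.le hz h1 h2) heq
  refine ⟨hv, hy, ?_⟩
  rw [div_eq_div_iff hu.ne' hx.ne']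
  linarith [mul_eq_mul_of_add_eq_two_mul hcross hv hy]

/-- Equality analysis in the Cauchy–Schwarz step: if `u,v,w,x,y,z > 0`, `v² ≤ u·w`,
`y² ≤ x·z`, `λ ∈ (0,1)` and `(λ·v + (1−λ)·y)² = (λ·u + (1−λ)·x)·(λ·w + (1−λ)·z)`,
then `v² = u·w`, `y² = x·z` and `w/u = z/x`. -/
theorem stmt7 (u v w x y z : ℝ) (hu : 0 < u) (hv : 0 < v) (hw : 0 < w)
    (hx : 0 < x) (hy : 0 < y) (hz : 0 < z)
    (h1 : v ^ 2 ≤ u * w) (h2 : y ^ 2 ≤ x * z)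
    (l : ℝ) (hl : l ∈ Set.Ioo (0 : ℝ) 1)
    (heq : (l * v + (1 - l) * y) ^ 2 = (l * u + (1 - l) * x) * (l * w + (1 - l) * z)) :
    v ^ 2 = u * w ∧ y ^ 2 = x * z ∧ w / u = z / x :=
  stmt7_general u v w x y z hu hx h1 h2 l hl heq
end

section
/- Let n ≥ 1, let R = MvPowerSeries (Fin n) ℂ, let j ∈ {1,…,n}, and let S be the subalgebra O_{n,L} of R consisting of power series all of whose exponents k satisfy k_i = 0 for all i < j. Let J be an ideal of R of finite colength, i.e. R/J is a finite-dimensional ℂ-vector space. Let J_L be the ideal of S generated by {f_L : f ∈ J}, and let ini(J)_L be the ideal of S generated by {g_L : g ∈ ini(J)} (each such g_L lies in S). Then ini_S(J_L) = ini(J)_L, where ini_S(J_L) denotes the ideal of S generated by the monomials X^{inexp(g)} for nonzero g ∈ J_L. -/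
open MvPowerSeries
open scoped Classical

/-- The initial exponent of a multivariate power series: the least element of its
support with respect to the lexicographic order on exponents, which corresponds to
the negative lexicographical order on monomials (and `0` for the zero series,
by convention). -/
noncomputable def inexp {n : ℕ} (f : MvPowerSeries (Fin n) ℂ) : Fin n →₀ ℕ :=
  if hf : f = 0 then 0 else
    ofLex (@WellFounded.min (Lex (Fin n →₀ ℕ)) (· < ·) IsWellFounded.wf
      {k : Lex (Fin n →₀ ℕ) | MvPowerSeries.coeff (R := ℂ) (ofLex k) f ≠ 0}
      (by
        by_contra h
        rw [Set.not_nonempty_iff_eq_empty, Set.eq_empty_iff_forall_notMem] at h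
        exact hf (MvPowerSeries.ext fun k => by
          have := h (toLex k)
          simpa using this)))

/-- `truncL n j f` is `f_L`: the power series obtained from `f` by keeping exactly
those terms whose exponent `k` satisfies `k_i = 0` for all (1-based) variable indices
`i < j`, i.e. for all `i : Fin n` with `(i : ℕ) + 1 < j`. -/
noncomputable def truncL (n j : ℕ) (f : MvPowerSeries (Fin n) ℂ) :
    MvPowerSeries (Fin n) ℂ :=
  fun k => if ∀ i : Fin n, (i : ℕ) + 1 < j → k i = 0 then MvPowerSeries.coeff (R := ℂ) k f else 0

/-- The subalgebra `S = O_{n,L}` (for `L = {j,…,n}`) of power series all of whose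
exponents `k` satisfy `k_i = 0` for all (1-based) variable indices `i < j`. -/
noncomputable def lowVanish (n j : ℕ) : Subalgebra ℂ (MvPowerSeries (Fin n) ℂ) where
  carrier := {f | ∀ k : Fin n →₀ ℕ, MvPowerSeries.coeff (R := ℂ) k f ≠ 0 →
    ∀ i : Fin n, (i : ℕ) + 1 < j → k i = 0}
  add_mem' := by
    intro f g hf hg k hk i hi
    by_cases h1 : MvPowerSeries.coeff (R := ℂ) k f ≠ 0
    · exact hf k h1 i hi
    · push_neg at h1
      have : MvPowerSeries.coeff (R := ℂ) k g ≠ 0 := by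
        intro h2
        apply hk
        rw [map_add, h1, h2, add_zero]
      exact hg k this i hi
  mul_mem' := by
    intro f g hf hg k hk i hi
    rw [MvPowerSeries.coeff_mul] at hk
    obtain ⟨p, hp, hne⟩ := Finset.exists_ne_zero_of_sum_ne_zero hk
    rw [Finset.HasAntidiagonal.mem_antidiagonal] at hp
    have h1 : MvPowerSeries.coeff (R := ℂ) p.1 f ≠ 0 := fun h => hne (by rw [h, zero_mul])
    have h2 : MvPowerSeries.coeff (R := ℂ) p.2 g ≠ 0 := fun h => hne (by rw [h, mul_zero])
    have e1 := hf p.1 h1 i hi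
    have e2 := hg p.2 h2 i hi
    have : k i = p.1 i + p.2 i := by rw [← hp]; rfl
    omega
  algebraMap_mem' := by
    intro c k hk i hi
    have : MvPowerSeries.coeff (R := ℂ) k ((MvPowerSeries.C (σ := Fin n) (R := ℂ)) c) ≠ 0 := hk
    rw [MvPowerSeries.coeff_C] at this
    by_cases h : k = 0
    · simp [h]
    · simp [h] at this

/-- The initial ideal `ini(K)` of an ideal `K` of `R = MvPowerSeries (Fin n) ℂ`:
the ideal generated by the initial monomials `X^{inexp f}` of the nonzero `f ∈ K`. -/
noncomputable def iniIdeal {n : ℕ} (K : Ideal (MvPowerSeries (Fin n) ℂ)) :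
    Ideal (MvPowerSeries (Fin n) ℂ) :=
  Ideal.span {g | ∃ f ∈ K, f ≠ 0 ∧ g = MvPowerSeries.monomial (R := ℂ) (inexp f) 1}

/-- The initial ideal `ini_S(K)` of an ideal `K` of the subalgebra `S = lowVanish n j`:
the ideal of `S` generated by the monomials `X^{inexp g}` of the nonzero `g ∈ K`. -/
noncomputable def iniIdealSub {n : ℕ} (j : ℕ) (K : Ideal (lowVanish n j)) :
    Ideal (lowVanish n j) :=
  Ideal.span {g : lowVanish n j | ∃ f ∈ K,
    (f : MvPowerSeries (Fin n) ℂ) ≠ 0 ∧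
    (g : MvPowerSeries (Fin n) ℂ) =
      MvPowerSeries.monomial (R := ℂ) (inexp (f : MvPowerSeries (Fin n) ℂ)) 1}

/-!
Exponents in `ℕ^L` are lex-smaller than all other exponents, so whenever `f_L ≠ 0` the
initial exponent of `f` is that of `f_L`. Since truncation is `S`-linear, `J_L` consists of
the truncations `f_L`, `f ∈ J`, and so `ini_S(J_L)` is generated by the initial monomials of
elements of `J` that lie in `S`. On the other side, truncation kills every multiple `r X^α`
with `α ∉ ℕ^L` and sends it to `r_L X^α` otherwise, so `ini(J)_L` has the same generators.
-/

section Truncation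

variable {n j : ℕ}

/-- `k ∈ ℕ^L`; variables are indexed from `1` in the paper, hence `i + 1 < j`. -/
abbrev VanishesBelow (j : ℕ) (k : Fin n →₀ ℕ) : Prop :=
  ∀ i : Fin n, (i : ℕ) + 1 < j → k i = 0

lemma coeff_truncL (f : MvPowerSeries (Fin n) ℂ) (k : Fin n →₀ ℕ) :
    coeff k (truncL n j f) = if VanishesBelow j k then coeff k f else 0 := rfl

lemma truncL_mem (f : MvPowerSeries (Fin n) ℂ) : truncL n j f ∈ lowVanish n j := by
  intro k hk
  rw [coeff_truncL] at hk
  by_contra h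
  exact hk (if_neg h)

lemma truncL_eq_self {f : MvPowerSeries (Fin n) ℂ} (hf : f ∈ lowVanish n j) :
    truncL n j f = f := by
  ext k
  rw [coeff_truncL, ite_eq_left_iff]
  intro hk
  by_contra hc
  exact hk (hf k (Ne.symm hc))

lemma truncL_zero : truncL n j (0 : MvPowerSeries (Fin n) ℂ) = 0 := by
  ext k
  simp [coeff_truncL]

lemma truncL_add (f g : MvPowerSeries (Fin n) ℂ) :
    truncL n j (f + g) = truncL n j f + truncL n j g := by
  ext k
  simp only [map_add, coeff_truncL]
  split_ifs <;> simp

lemma truncL_mul {s : MvPowerSeries (Fin n) ℂ} (hs : s ∈ lowVanish n j)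
    (g : MvPowerSeries (Fin n) ℂ) : truncL n j (s * g) = s * truncL n j g := by
  rw [← truncL_eq_self (mul_mem hs (truncL_mem g))]
  ext k
  rw [coeff_truncL, coeff_truncL]
  split_ifs with hk
  · rw [coeff_mul, coeff_mul]
    refine Finset.sum_congr rfl fun p hp => ?_
    rw [Finset.HasAntidiagonal.mem_antidiagonal] at hp
    rw [coeff_truncL, if_pos fun i hi => ?_]
    have hpi := congrArg (· i) hp
    have hki := hk i hi
    simp only [Finsupp.add_apply] at hpi
    omega
  · rfl

lemma monomial_mem_lowVanish {α : Fin n →₀ ℕ} (hα : VanishesBelow j α) :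
    monomial α (1 : ℂ) ∈ lowVanish n j := by
  intro k hk
  rw [coeff_monomial] at hk
  split_ifs at hk with h
  · exact h ▸ hα
  · exact absurd rfl hk

lemma truncL_mul_monomial_of_not_vanishesBelow (r : MvPowerSeries (Fin n) ℂ)
    {α : Fin n →₀ ℕ} (hα : ¬ VanishesBelow j α) : truncL n j (r * monomial α 1) = 0 := by
  ext k
  rw [map_zero, coeff_truncL]
  split_ifs with hk
  · rw [coeff_mul_monomial, if_neg]
    intro hle
    exact hα fun i hi => Nat.eq_zero_of_le_zero (hk i hi ▸ hle i)
  · rfl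

noncomputable def truncS (n j : ℕ) (f : MvPowerSeries (Fin n) ℂ) : lowVanish n j :=
  ⟨truncL n j f, truncL_mem f⟩

@[simp]
lemma coe_truncS (f : MvPowerSeries (Fin n) ℂ) : (truncS n j f : MvPowerSeries (Fin n) ℂ) =
    truncL n j f := rfl

lemma mem_span_truncL_iff {K : Ideal (MvPowerSeries (Fin n) ℂ)} {g : lowVanish n j} :
    g ∈ Ideal.span {g : lowVanish n j | ∃ f ∈ K, (g : MvPowerSeries (Fin n) ℂ) = truncL n j f}
      ↔ ∃ f ∈ K, (g : MvPowerSeries (Fin n) ℂ) = truncL n j f := by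
  refine ⟨fun hg => ?_, fun hg => Ideal.subset_span hg⟩
  induction hg using Submodule.span_induction with
  | mem g hg => exact hg
  | zero => exact ⟨0, K.zero_mem, truncL_zero.symm⟩
  | add a b _ _ ha hb =>
    obtain ⟨f, hf, ha⟩ := ha
    obtain ⟨f', hf', hb⟩ := hb
    exact ⟨f + f', K.add_mem hf hf', by rw [Subalgebra.coe_add, ha, hb, truncL_add]⟩
  | smul c a _ ha =>
    obtain ⟨f, hf, ha⟩ := ha
    exact ⟨c * f, K.mul_mem_left _ hf, by rw [truncL_mul c.2, ← ha]; rfl⟩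

lemma truncS_mem_of_mem_span {I : Ideal (lowVanish n j)} {s : Set (MvPowerSeries (Fin n) ℂ)}
    (hs : ∀ g ∈ s, ∀ r, truncS n j (r * g) ∈ I) {f : MvPowerSeries (Fin n) ℂ}
    (hf : f ∈ Ideal.span s) : truncS n j f ∈ I := by
  -- truncation is only `S`-linear, so induct on the statement for all multiples of `f`
  suffices ∀ r, truncS n j (r * f) ∈ I by simpa using this 1
  induction hf using Submodule.span_induction with
  | mem g hg => exact hs g hg
  | zero =>
    intro r
    convert I.zero_mem
    exact Subtype.ext (by simp [truncL_zero])
  | add a b _ _ ha hb =>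
    intro r
    convert I.add_mem (ha r) (hb r) using 1
    exact Subtype.ext (by simp [mul_add, truncL_add])
  | smul c a _ ha => simpa [mul_assoc] using fun r => ha (r * c)

end Truncation

section InitialExponent

variable {n j : ℕ}

lemma coeff_inexp_ne_zero {f : MvPowerSeries (Fin n) ℂ} (hf : f ≠ 0) :
    coeff (inexp f) f ≠ 0 := by
  rw [inexp, dif_neg hf]
  exact WellFounded.min_mem _ {k : Lex (Fin n →₀ ℕ) | coeff (ofLex k) f ≠ 0} _

lemma toLex_inexp_le {f : MvPowerSeries (Fin n) ℂ} {k : Fin n →₀ ℕ} (hk : coeff k f ≠ 0) :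
    toLex (inexp f) ≤ toLex k := by
  have hf : f ≠ 0 := by rintro rfl; exact hk (map_zero _)
  rw [inexp, dif_neg hf, toLex_ofLex]
  exact not_lt.mp (WellFounded.not_lt_min _ _
    (show toLex k ∈ {k : Lex (Fin n →₀ ℕ) | coeff (ofLex k) f ≠ 0} from hk))

lemma toLex_lt_of_vanishesBelow {α β : Fin n →₀ ℕ} (hα : VanishesBelow j α)
    (hβ : ¬ VanishesBelow j β) : toLex α < toLex β := by
  simp only [VanishesBelow, not_forall] at hβ
  obtain ⟨i, hij, hi⟩ := hβ
  obtain ⟨i₀, ⟨hi₀j, hi₀⟩, hmin⟩ := WellFounded.has_min wellFounded_lt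
    {i : Fin n | (i : ℕ) + 1 < j ∧ β i ≠ 0} ⟨i, hij, hi⟩
  refine Finsupp.Lex.lt_iff.mpr ⟨i₀, fun l hl => ?_, ?_⟩
  · have hlj : (l : ℕ) + 1 < j := lt_trans (Nat.add_lt_add_right hl 1) hi₀j
    show α l = β l
    rw [hα l hlj, eq_comm]
    by_contra hβl
    exact hmin l ⟨hlj, hβl⟩ hl
  · show α i₀ < β i₀
    rw [hα i₀ hi₀j]
    exact Nat.pos_of_ne_zero hi₀

lemma vanishesBelow_inexp_truncL (f : MvPowerSeries (Fin n) ℂ) :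
    VanishesBelow j (inexp (truncL n j f)) := by
  by_cases hf : truncL n j f = 0
  · rw [hf, inexp, dif_pos rfl]
    exact fun _ _ => rfl
  · exact truncL_mem f _ (coeff_inexp_ne_zero hf)

lemma inexp_truncL {f : MvPowerSeries (Fin n) ℂ} (hf : truncL n j f ≠ 0) :
    inexp (truncL n j f) = inexp f := by
  have hlow := vanishesBelow_inexp_truncL (j := j) f
  have hcoeff := coeff_inexp_ne_zero hf
  rw [coeff_truncL, if_pos hlow] at hcoeff
  refine toLex.injective (le_antisymm ?_ (toLex_inexp_le hcoeff))
  by_cases hf' : VanishesBelow j (inexp f)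
  · apply toLex_inexp_le
    rw [coeff_truncL, if_pos hf']
    exact coeff_inexp_ne_zero fun h => hf (by rw [h, truncL_zero])
  · exact (toLex_lt_of_vanishesBelow hlow hf').le

lemma truncL_ne_zero {f : MvPowerSeries (Fin n) ℂ} (hf : f ≠ 0)
    (hlow : VanishesBelow j (inexp f)) : truncL n j f ≠ 0 := by
  intro h
  have hcoeff := coeff_truncL (j := j) f (inexp f)
  rw [if_pos hlow, h, map_zero] at hcoeff
  exact coeff_inexp_ne_zero hf hcoeff.symm

end InitialExponent

theorem stmt11_general (n j : ℕ)
    (J : Ideal (MvPowerSeries (Fin n) ℂ)) :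
    iniIdealSub j
        (Ideal.span {g : lowVanish n j | ∃ f ∈ J,
          (g : MvPowerSeries (Fin n) ℂ) = truncL n j f}) =
      Ideal.span {g : lowVanish n j | ∃ f ∈ iniIdeal J,
        (g : MvPowerSeries (Fin n) ℂ) = truncL n j f} := by
  refine le_antisymm (Ideal.span_le.mpr ?_) (Ideal.span_le.mpr ?_)
  · rintro g ⟨f, hf, hf0, hg⟩
    obtain ⟨h, hhJ, hfh⟩ := mem_span_truncL_iff.mp hf
    rw [hfh] at hf0
    have hh0 : h ≠ 0 := by rintro rfl; exact hf0 truncL_zero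
    refine Ideal.subset_span ⟨monomial (inexp h) 1, Ideal.subset_span ⟨h, hhJ, hh0, rfl⟩, ?_⟩
    rw [hg, hfh, inexp_truncL hf0, truncL_eq_self (monomial_mem_lowVanish ?_)]
    exact inexp_truncL hf0 ▸ vanishesBelow_inexp_truncL h
  · rintro g ⟨f, hf, hg⟩
    obtain rfl : g = truncS n j f := Subtype.ext hg
    refine truncS_mem_of_mem_span ?_ hf
    rintro _ ⟨F, hFJ, hF0, rfl⟩ r
    by_cases hlow : VanishesBelow j (inexp F)
    · have hX := monomial_mem_lowVanish hlow
      have htrunc : truncS n j (r * monomial (inexp F) 1) = truncS n j r * ⟨_, hX⟩ :=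
        Subtype.ext (by rw [coe_truncS, mul_comm, truncL_mul hX, mul_comm]; rfl)
      have hF : truncL n j F ≠ 0 := truncL_ne_zero hF0 hlow
      rw [htrunc]
      refine Ideal.mul_mem_left _ _ (Ideal.subset_span
        ⟨truncS n j F, Ideal.subset_span ⟨F, hFJ, rfl⟩, hF, ?_⟩)
      rw [coe_truncS, inexp_truncL hF]
    · convert Ideal.zero_mem _
      exact Subtype.ext (truncL_mul_monomial_of_not_vanishesBelow r hlow)

/-- Let `n ≥ 1`, `R = MvPowerSeries (Fin n) ℂ`, `j ∈ {1,…,n}` and let `S = O_{n,L}`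
(`L = {j,…,n}`) be the subalgebra of series whose exponents vanish below `j`.
Let `J` be an ideal of `R` of finite colength. Let `J_L` be the ideal of `S`
generated by the truncations `f_L` for `f ∈ J`, and let `ini(J)_L` be the ideal of `S`
generated by the truncations `g_L` for `g ∈ ini(J)`. Then `ini_S(J_L) = ini(J)_L`. -/
theorem stmt11 (n j : ℕ) (hn : 1 ≤ n) (hj1 : 1 ≤ j) (hjn : j ≤ n)
    (J : Ideal (MvPowerSeries (Fin n) ℂ))
    (hJ : FiniteDimensional ℂ (MvPowerSeries (Fin n) ℂ ⧸ J)) :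
    iniIdealSub j
        (Ideal.span {g : lowVanish n j | ∃ f ∈ J,
          (g : MvPowerSeries (Fin n) ℂ) = truncL n j f}) =
      Ideal.span {g : lowVanish n j | ∃ f ∈ iniIdeal J,
        (g : MvPowerSeries (Fin n) ℂ) = truncL n j f} :=
  stmt11_general n j J
end
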